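/- arXiv:1906.02164 — 5 statements merged into one kernel-verified Lean document; each statement's English description precedes it below -/
import Mathlib

section
/- Let X be a real-valued random variable on a finite set Ω with |X| ≤ r for some r > 0. Then |E[X³] − E[X²]·E[X]| ≤ 2r·(E[X²] − E[X]²). -/
/-! With `μ = E[X]`, both sides are expectations of multiples of `(X - μ)²`:
`E[X³] - E[X²] E[X] = E[(X - μ)² (X + μ)]` and `E[X²] - μ² = E[(X - μ)²]`,
and `|X + μ| ≤ 2r` because `|μ| ≤ r`. -/

namespace Finset

variable {ι : Type*} (s : Finset ι) {p : ι → ℝ} (X : ι → ℝ)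

theorem abs_weighted_sum_le_of_abs_le {r : ℝ} (hp : ∀ i ∈ s, 0 ≤ p i) (hp1 : ∑ i ∈ s, p i = 1)
    (hX : ∀ i ∈ s, |X i| ≤ r) : |∑ i ∈ s, p i * X i| ≤ r :=
  calc |∑ i ∈ s, p i * X i| ≤ ∑ i ∈ s, |p i * X i| := abs_sum_le_sum_abs _ _
    _ ≤ ∑ i ∈ s, p i * r := sum_le_sum fun i hi => by
        rw [abs_mul, abs_of_nonneg (hp i hi)]
        exact mul_le_mul_of_nonneg_left (hX i hi) (hp i hi)
    _ = r := by rw [← sum_mul, hp1, one_mul]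

theorem weighted_sum_sq_sub_mean_sq (hp1 : ∑ i ∈ s, p i = 1) (μ : ℝ)
    (hμ : ∑ i ∈ s, p i * X i = μ) :
    ∑ i ∈ s, p i * X i ^ 2 - μ ^ 2 = ∑ i ∈ s, p i * (X i - μ) ^ 2 := by
  have h (i : ι) : p i * (X i - μ) ^ 2 = p i * X i ^ 2 - 2 * μ * (p i * X i) + μ ^ 2 * p i := by
    ring
  simp only [h, sum_add_distrib, sum_sub_distrib, ← mul_sum, hp1, hμ]
  ring

theorem weighted_sum_cube_sub_eq (hp1 : ∑ i ∈ s, p i = 1) (μ : ℝ)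
    (hμ : ∑ i ∈ s, p i * X i = μ) :
    ∑ i ∈ s, p i * X i ^ 3 - (∑ i ∈ s, p i * X i ^ 2) * μ =
      ∑ i ∈ s, p i * ((X i - μ) ^ 2 * (X i + μ)) := by
  have h (i : ι) : p i * ((X i - μ) ^ 2 * (X i + μ)) =
      p i * X i ^ 3 - μ * (p i * X i ^ 2) - μ ^ 2 * (p i * X i) + μ ^ 3 * p i := by
    ring
  simp only [h, sum_add_distrib, sum_sub_distrib, ← mul_sum, hp1, hμ]
  ring

end Finset

open Finset

theorem third_moment_bound_general {Ω : Type*} [Fintype Ω] (p : Ω → ℝ) (X : Ω → ℝ) (r : ℝ)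
    (hp : ∀ α, 0 ≤ p α) (hp1 : ∑ α, p α = 1)
    (hX : ∀ α, |X α| ≤ r) :
    |(∑ α, p α * (X α) ^ 3) - (∑ α, p α * (X α) ^ 2) * (∑ α, p α * X α)| ≤
      2 * r * ((∑ α, p α * (X α) ^ 2) - (∑ α, p α * X α) ^ 2) := by
  set μ := ∑ α, p α * X α with hμ
  have hμr : |μ| ≤ r :=
    abs_weighted_sum_le_of_abs_le _ X (fun α _ => hp α) hp1 fun α _ => hX α
  rw [weighted_sum_cube_sub_eq _ X hp1 μ hμ.symm, weighted_sum_sq_sub_mean_sq _ X hp1 μ hμ.symm,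
    mul_sum]
  refine (abs_sum_le_sum_abs _ _).trans (sum_le_sum fun α _ => ?_)
  have hsum : |X α + μ| ≤ 2 * r := by linarith [abs_add_le (X α) μ, hX α]
  rw [abs_mul, abs_mul, abs_of_nonneg (hp α), abs_of_nonneg (sq_nonneg _)]
  calc p α * ((X α - μ) ^ 2 * |X α + μ|) ≤ p α * ((X α - μ) ^ 2 * (2 * r)) := by
        gcongr
        exact hp α
    _ = 2 * r * (p α * (X α - μ) ^ 2) := by ring

/-- If `X` is a random variable on a finite set `Ω` with pmf `p` and `|X| ≤ r`,
then `|E[X³] − E[X²]·E[X]| ≤ 2r·(E[X²] − E[X]²)`. -/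
theorem third_moment_bound {Ω : Type*} [Fintype Ω] (p : Ω → ℝ) (X : Ω → ℝ) (r : ℝ)
    (hr : 0 < r) (hp : ∀ α, 0 ≤ p α) (hp1 : ∑ α, p α = 1)
    (hX : ∀ α, |X α| ≤ r) :
    |(∑ α, p α * (X α) ^ 3) - (∑ α, p α * (X α) ^ 2) * (∑ α, p α * X α)| ≤
      2 * r * ((∑ α, p α * (X α) ^ 2) - (∑ α, p α * X α) ^ 2) :=
  third_moment_bound_general p X r hp hp1 hX
end

section
/- Let v₁, v₂ be probability distributions with protected attribute Z ∈ {0,1} and class label Y, and 0 < τ₂ ≤ τ₁ ≤ 1, such that v_i(Z=0) = τ_i·v_i(Z=1) and v_i(Y=y, Z=0) = τ_i·v_i(Y=y, Z=1) for i = 1,2 and fixed label y. Then for any C ∈ [0,1], the mixture q = C·v₁ + (1−C)·v₂ satisfies q(Y=y | Z=z₁) ≥ τ₁·τ₂·q(Y=y | Z=z₂) for all z₁, z₂ ∈ {0,1} (assuming all conditioning events have positive probability). -/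
/-!
Write `N z = q(Y = y, Z = z)` and `D z = q(Z = z)`. Both are mixtures of the corresponding
quantities of `v₁` and `v₂`, whose `Z = 0` values are the `Z = 1` values scaled by `τ₁` and `τ₂`
respectively; hence `N 0 / N 1` and `D 0 / D 1` both lie in `[τ₂, τ₁]`. Any two conditional rates
`N z / D z` therefore differ by a factor of at least `τ₂ / τ₁ ≥ τ₁ τ₂`.
-/

open Finset

theorem mix_scaled_mem_Icc {a b x₁ x₂ τ₁ τ₂ : ℝ} (ha : 0 ≤ a) (hb : 0 ≤ b)
    (hx₁ : 0 ≤ x₁) (hx₂ : 0 ≤ x₂) (hτ : τ₂ ≤ τ₁) :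
    a * (τ₁ * x₁) + b * (τ₂ * x₂) ∈ Set.Icc (τ₂ * (a * x₁ + b * x₂)) (τ₁ * (a * x₁ + b * x₂)) :=
  ⟨by nlinarith [mul_nonneg (mul_nonneg ha hx₁) (sub_nonneg.2 hτ)],
   by nlinarith [mul_nonneg (mul_nonneg hb hx₂) (sub_nonneg.2 hτ)]⟩

theorem div_mul_div_le_div_of_mul_le {lo hi n n' d d' : ℝ} (hlo : 0 ≤ lo) (hn : 0 ≤ n)
    (hd' : 0 < d') (hnn' : lo * n ≤ n') (hdd' : d' ≤ hi * d) :
    lo / hi * (n / d) ≤ n' / d' :=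
  calc lo / hi * (n / d) = lo * n / (hi * d) := div_mul_div_comm _ _ _ _
    _ ≤ n' / (hi * d) := by gcongr; exact hd'.le.trans hdd'
    _ ≤ n' / d' := div_le_div_of_nonneg_left ((mul_nonneg hlo hn).trans hnn') hd' hdd'

theorem Bool.div_mul_div_le_div_of_mem_Icc (N D : Bool → ℝ) {lo hi : ℝ} (hlo : 0 < lo)
    (hN : 0 ≤ N true) (hD : ∀ z, 0 < D z)
    (hNf : N false ∈ Set.Icc (lo * N true) (hi * N true))
    (hDf : D false ∈ Set.Icc (lo * D true) (hi * D true)) (z₁ z₂ : Bool) :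
    lo / hi * (N z₂ / D z₂) ≤ N z₁ / D z₁ := by
  have hhi : 0 < hi := pos_of_mul_pos_left ((hD false).trans_le hDf.2) (hD true).le
  have hlohi : lo / hi ≤ 1 :=
    div_le_one_of_le₀ (le_of_mul_le_mul_right (hDf.1.trans hDf.2) (hD true)) hhi.le
  have hNf0 : 0 ≤ N false := (mul_nonneg hlo.le hN).trans hNf.1
  rcases z₁ <;> rcases z₂
  · exact mul_le_of_le_one_left (div_nonneg hNf0 (hD false).le) hlohi
  · exact div_mul_div_le_div_of_mul_le hlo.le hN (hD false) hNf.1 hDf.2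
  · -- the forward case with the factors `hi⁻¹, lo⁻¹` in place of `lo, hi`
    rw [← inv_div_inv]
    exact div_mul_div_le_div_of_mul_le (inv_nonneg.2 hhi.le) hNf0 (hD true)
      ((inv_mul_le_iff₀ hhi).2 hNf.2) ((le_inv_mul_iff₀ hlo).2 hDf.1)
  · exact mul_le_of_le_one_left (div_nonneg hN (hD true).le) hlohi

theorem mixture_statistical_rate_general {Ω 𝒴 : Type*} [Fintype Ω] [DecidableEq 𝒴]
    (Zf : Ω → Bool) (Yf : Ω → 𝒴) (y : 𝒴)
    (v₁ v₂ : Ω → ℝ) (hv₁0 : ∀ α, 0 ≤ v₁ α)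
    (hv₂0 : ∀ α, 0 ≤ v₂ α)
    (τ₁ τ₂ : ℝ) (hτ₂ : 0 < τ₂) (hτ : τ₂ ≤ τ₁) (hτ₁ : τ₁ ≤ 1)
    (h1Z : ∑ α ∈ univ.filter (fun α => Zf α = false), v₁ α =
      τ₁ * ∑ α ∈ univ.filter (fun α => Zf α = true), v₁ α)
    (h2Z : ∑ α ∈ univ.filter (fun α => Zf α = false), v₂ α =
      τ₂ * ∑ α ∈ univ.filter (fun α => Zf α = true), v₂ α)
    (h1YZ : ∑ α ∈ univ.filter (fun α => Yf α = y ∧ Zf α = false), v₁ α =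
      τ₁ * ∑ α ∈ univ.filter (fun α => Yf α = y ∧ Zf α = true), v₁ α)
    (h2YZ : ∑ α ∈ univ.filter (fun α => Yf α = y ∧ Zf α = false), v₂ α =
      τ₂ * ∑ α ∈ univ.filter (fun α => Yf α = y ∧ Zf α = true), v₂ α)
    (C : ℝ) (hC0 : 0 ≤ C) (hC1 : C ≤ 1)
    (q : Ω → ℝ) (hq : ∀ α, q α = C * v₁ α + (1 - C) * v₂ α)
    (hposZ : ∀ z, 0 < ∑ α ∈ univ.filter (fun α => Zf α = z), q α) :
    ∀ z₁ z₂ : Bool,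
      (∑ α ∈ univ.filter (fun α => Yf α = y ∧ Zf α = z₁), q α) /
        (∑ α ∈ univ.filter (fun α => Zf α = z₁), q α) ≥
      τ₁ * τ₂ * ((∑ α ∈ univ.filter (fun α => Yf α = y ∧ Zf α = z₂), q α) /
        (∑ α ∈ univ.filter (fun α => Zf α = z₂), q α)) := by
  intro z₁ z₂
  have hC : 0 ≤ 1 - C := sub_nonneg.2 hC1
  have hq0 (α : Ω) : 0 ≤ q α := by
    rw [hq]; exact add_nonneg (mul_nonneg hC0 (hv₁0 α)) (mul_nonneg hC (hv₂0 α))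
  have hsum (S : Finset Ω) :
      ∑ α ∈ S, q α = C * ∑ α ∈ S, v₁ α + (1 - C) * ∑ α ∈ S, v₂ α := by
    simp only [hq, sum_add_distrib, mul_sum]
  have hmix (S : Finset Ω) := mix_scaled_mem_Icc hC0 hC (sum_nonneg fun α (_ : α ∈ S) => hv₁0 α)
    (sum_nonneg fun α (_ : α ∈ S) => hv₂0 α) hτ
  have hrate := Bool.div_mul_div_le_div_of_mem_Icc
    (fun z => ∑ α ∈ univ.filter (fun α => Yf α = y ∧ Zf α = z), q α)
    (fun z => ∑ α ∈ univ.filter (fun α => Zf α = z), q α) hτ₂ (sum_nonneg fun α _ => hq0 α) hposZ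
    (by simp only [hsum, h1YZ, h2YZ]; exact hmix _)
    (by simp only [hsum, h1Z, h2Z]; exact hmix _) z₁ z₂
  have hτ₁τ₂ : τ₁ * τ₂ ≤ τ₂ / τ₁ := by
    have hτ₁0 : 0 < τ₁ := hτ₂.trans_le hτ
    rw [le_div_iff₀ hτ₁0]
    linarith [mul_le_mul_of_nonneg_left (mul_le_one₀ hτ₁ hτ₁0.le hτ₁) hτ₂.le]
  exact (mul_le_mul_of_nonneg_right hτ₁τ₂
    (div_nonneg (sum_nonneg fun α _ => hq0 α) (hposZ z₂).le)).trans hrate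

/-- Statistical-rate guarantee for a mixture `q = C·v₁ + (1−C)·v₂`:
`q(Y=y | Z=z₁) ≥ τ₁·τ₂·q(Y=y | Z=z₂)` for all `z₁, z₂ ∈ {0,1}`. -/
theorem mixture_statistical_rate {Ω 𝒴 : Type*} [Fintype Ω] [DecidableEq 𝒴]
    (Zf : Ω → Bool) (Yf : Ω → 𝒴) (y : 𝒴)
    (v₁ v₂ : Ω → ℝ) (hv₁0 : ∀ α, 0 ≤ v₁ α) (hv₁1 : ∑ α, v₁ α = 1)
    (hv₂0 : ∀ α, 0 ≤ v₂ α) (hv₂1 : ∑ α, v₂ α = 1)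
    (τ₁ τ₂ : ℝ) (hτ₂ : 0 < τ₂) (hτ : τ₂ ≤ τ₁) (hτ₁ : τ₁ ≤ 1)
    (h1Z : ∑ α ∈ univ.filter (fun α => Zf α = false), v₁ α =
      τ₁ * ∑ α ∈ univ.filter (fun α => Zf α = true), v₁ α)
    (h2Z : ∑ α ∈ univ.filter (fun α => Zf α = false), v₂ α =
      τ₂ * ∑ α ∈ univ.filter (fun α => Zf α = true), v₂ α)
    (h1YZ : ∑ α ∈ univ.filter (fun α => Yf α = y ∧ Zf α = false), v₁ α =
      τ₁ * ∑ α ∈ univ.filter (fun α => Yf α = y ∧ Zf α = true), v₁ α)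
    (h2YZ : ∑ α ∈ univ.filter (fun α => Yf α = y ∧ Zf α = false), v₂ α =
      τ₂ * ∑ α ∈ univ.filter (fun α => Yf α = y ∧ Zf α = true), v₂ α)
    (C : ℝ) (hC0 : 0 ≤ C) (hC1 : C ≤ 1)
    (q : Ω → ℝ) (hq : ∀ α, q α = C * v₁ α + (1 - C) * v₂ α)
    (hposZ : ∀ z, 0 < ∑ α ∈ univ.filter (fun α => Zf α = z), q α) :
    ∀ z₁ z₂ : Bool,
      (∑ α ∈ univ.filter (fun α => Yf α = y ∧ Zf α = z₁), q α) /
        (∑ α ∈ univ.filter (fun α => Zf α = z₁), q α) ≥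
      τ₁ * τ₂ * ((∑ α ∈ univ.filter (fun α => Yf α = y ∧ Zf α = z₂), q α) /
        (∑ α ∈ univ.filter (fun α => Zf α = z₂), q α)) :=
  mixture_statistical_rate_general Zf Yf y v₁ v₂ hv₁0 hv₂0 τ₁ τ₂ hτ₂ hτ hτ₁ h1Z h2Z h1YZ h2YZ C hC0
    hC1 q hq hposZ
end

section
/- Let p and q be probability distributions on a finite domain with protected attribute Z ∈ {0,1} and class label Y, let τ ∈ [0,1], C ∈ (0,1], and let δ = max_{z∈{0,1}} |p(Y=y, Z=z) − q(Y=y, Z=z)|. Suppose q(Y=y, Z=0) ≥ τ·q(Y=y, Z=1), and q(Y=y, Z=z) ≥ C/4 for both z ∈ {0,1}. Then p(Y=y, Z=0)/p(Y=y, Z=1) ≥ τ − δ·(1+τ)/(C/4 + δ). -/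
open Finset

/-!
Perturbing the prior's joint masses by at most `δ` can lower the numerator by `δ` and raise the
denominator by `δ`, so `p₀ / p₁ ≥ (τ q₁ - δ) / (q₁ + δ) = τ - δ (1 + τ) / (q₁ + δ)`, and the last
expression only decreases when `q₁` is replaced by its lower bound `C / 4`.
-/

theorem mul_sub_div_add_eq_sub_div {K : Type*} [Field K] {τ b δ : K} (h : b + δ ≠ 0) :
    (τ * b - δ) / (b + δ) = τ - δ * (1 + τ) / (b + δ) := by
  field_simp
  ring

section

variable {K : Type*} [Field K] [LinearOrder K] [IsStrictOrderedRing K]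

theorem div_le_div_of_le_of_le_of_nonneg {a b c d : K} (ha : 0 ≤ a) (hca : c ≤ a) (hb : 0 < b)
    (hbd : b ≤ d) : c / d ≤ a / b := by
  rcases le_or_gt c 0 with hc | hc
  · exact (div_nonpos_of_nonpos_of_nonneg hc (hb.le.trans hbd)).trans (div_nonneg ha hb.le)
  · exact div_le_div₀ ha hca hb hbd

theorem ratio_ge_of_abs_sub_le {a b a' b' τ δ m : K} (ha : 0 ≤ a) (hb : 0 < b)
    (haδ : |a - a'| ≤ δ) (hbδ : |b - b'| ≤ δ) (hrate : τ * b' ≤ a') (hm : 0 < m) (hmb : m ≤ b')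
    (hτ : 0 ≤ τ) : τ - δ * (1 + τ) / (m + δ) ≤ a / b := by
  have hδ : 0 ≤ δ := (abs_nonneg _).trans haδ
  have hnum : τ * b' - δ ≤ a := by linarith [(abs_le.mp haδ).1]
  have hden : b ≤ b' + δ := by linarith [(abs_le.mp hbδ).2]
  calc τ - δ * (1 + τ) / (m + δ)
      ≤ τ - δ * (1 + τ) / (b' + δ) := by gcongr
    _ = (τ * b' - δ) / (b' + δ) := (mul_sub_div_add_eq_sub_div (by linarith)).symm
    _ ≤ a / b := div_le_div_of_le_of_le_of_nonneg ha hnum hb hden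

end

theorem joint_ratio_transfer_general {Ω 𝒴 : Type*} [Fintype Ω] [DecidableEq 𝒴]
    (Zf : Ω → Bool) (Yf : Ω → 𝒴) (y : 𝒴)
    (p : Ω → ℝ) (hp0 : ∀ α, 0 ≤ p α)
    (τ C : ℝ) (hτ0 : 0 ≤ τ) (hC0 : 0 < C)
    (pJ qJ : Bool → ℝ)
    (hpJ : ∀ z, pJ z = ∑ α ∈ univ.filter (fun α => Yf α = y ∧ Zf α = z), p α)
    (δ : ℝ) (hδ : δ = max |pJ false - qJ false| |pJ true - qJ true|)
    (hqrate : qJ false ≥ τ * qJ true)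
    (hqlb : ∀ z, qJ z ≥ C / 4)
    (hppos : 0 < pJ true) :
    pJ false / pJ true ≥ τ - δ * (1 + τ) / (C / 4 + δ) := by
  have hpf : 0 ≤ pJ false := hpJ false ▸ sum_nonneg fun α _ => hp0 α
  exact ratio_ge_of_abs_sub_le hpf hppos (hδ ▸ le_max_left _ _) (hδ ▸ le_max_right _ _) hqrate
    (by positivity) (hqlb true) hτ0

/-- Statistical-rate transfer from the prior `q` to the max-entropy distribution
`p`: if `q(Y=y,Z=0) ≥ τ·q(Y=y,Z=1)` and `q(Y=y,Z=z) ≥ C/4`, then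
`p(Y=y,Z=0)/p(Y=y,Z=1) ≥ τ − δ(1+τ)/(C/4+δ)` with
`δ = max_z |p(Y=y,Z=z) − q(Y=y,Z=z)|`. -/
theorem joint_ratio_transfer {Ω 𝒴 : Type*} [Fintype Ω] [DecidableEq 𝒴]
    (Zf : Ω → Bool) (Yf : Ω → 𝒴) (y : 𝒴)
    (p q : Ω → ℝ) (hp0 : ∀ α, 0 ≤ p α) (hp1 : ∑ α, p α = 1)
    (hq0 : ∀ α, 0 ≤ q α) (hq1 : ∑ α, q α = 1)
    (τ C : ℝ) (hτ0 : 0 ≤ τ) (hτ1 : τ ≤ 1) (hC0 : 0 < C) (hC1 : C ≤ 1)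
    (pJ qJ : Bool → ℝ)
    (hpJ : ∀ z, pJ z = ∑ α ∈ univ.filter (fun α => Yf α = y ∧ Zf α = z), p α)
    (hqJ : ∀ z, qJ z = ∑ α ∈ univ.filter (fun α => Yf α = y ∧ Zf α = z), q α)
    (δ : ℝ) (hδ : δ = max |pJ false - qJ false| |pJ true - qJ true|)
    (hqrate : qJ false ≥ τ * qJ true)
    (hqlb : ∀ z, qJ z ≥ C / 4)
    (hppos : 0 < pJ true) :
    pJ false / pJ true ≥ τ - δ * (1 + τ) / (C / 4 + δ) :=
  joint_ratio_transfer_general Zf Yf y p hp0 τ C hτ0 hC0 pJ qJ hpJ δ hδ hqrate hqlb hppos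
end

section
/- Let Ω = {0,1}^n, q : Ω → [0,1] a probability distribution, θ ∈ ℝ^n, and define h(λ) = log(Σ_{α∈Ω} q(α)·e^{⟨λ, α−θ⟩}). Then h is 4n-second-order robust: for all λ₀, λ₁ ∈ ℝ^n with ‖λ₁‖_∞ ≤ 1, |D³h(λ₀)[λ₁,λ₁,λ₁]| ≤ 4n·D²h(λ₀)[λ₁,λ₁], where D^k h(λ₀)[λ₁,…,λ₁] denotes the k-th derivative of t ↦ h(λ₀ + t·λ₁) at t = 0. -/
/-!
Along the line `t ↦ λ₀ + t • λ₁`, `h` is the log-partition function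
`t ↦ log ∑ₐ w a · exp (t · c a)` of the weights `w α = q α · exp ⟨λ₀, α - θ⟩` and the values
`c α = ⟨λ₁, α - θ⟩`. Its second and third derivatives are the variance and the third central
moment of `c` under the exponentially tilted weights. Since the mean lies in the convex hull of
the values, `|c a - mean| ≤ r` whenever all values differ by at most `r`, so
`|E (c - mean)³| ≤ r · E (c - mean)²`; on `{0,1}ⁿ` with `‖λ₁‖_∞ ≤ 1` one may take `r = n`.
-/

open Finset Real

section WeightedMoments

variable {ι : Type*} [Fintype ι] (p c : ι → ℝ)

def weightedMoment (k : ℕ) : ℝ := ∑ a, p a * c a ^ k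

noncomputable def weightedMean : ℝ := weightedMoment p c 1 / weightedMoment p c 0

noncomputable def weightedCentralMoment (k : ℕ) : ℝ :=
  (∑ a, p a * (c a - weightedMean p c) ^ k) / weightedMoment p c 0

variable {p c}

lemma weightedMoment_zero_pos (hp : ∀ a, 0 ≤ p a) (hpos : ∃ a, 0 < p a) :
    0 < weightedMoment p c 0 := by
  obtain ⟨a, ha⟩ := hpos
  simp only [weightedMoment, pow_zero, mul_one]
  exact sum_pos' (fun b _ => hp b) ⟨a, mem_univ a, ha⟩

lemma weightedCentralMoment_two (h0 : weightedMoment p c 0 ≠ 0) :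
    weightedCentralMoment p c 2 =
      weightedMoment p c 2 / weightedMoment p c 0 - weightedMean p c ^ 2 := by
  have expand : ∑ a, p a * (c a - weightedMean p c) ^ 2 =
      weightedMoment p c 2 - 2 * weightedMean p c * weightedMoment p c 1 +
        weightedMean p c ^ 2 * weightedMoment p c 0 := by
    simp only [weightedMoment, mul_sum, ← sum_sub_distrib, ← sum_add_distrib]
    exact sum_congr rfl fun a _ => by ring
  rw [weightedCentralMoment, expand, weightedMean]
  field_simp
  ring

lemma weightedCentralMoment_three (h0 : weightedMoment p c 0 ≠ 0) :
    weightedCentralMoment p c 3 =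
      weightedMoment p c 3 / weightedMoment p c 0 -
        3 * (weightedMoment p c 2 / weightedMoment p c 0) * weightedMean p c +
          2 * weightedMean p c ^ 3 := by
  have expand : ∑ a, p a * (c a - weightedMean p c) ^ 3 =
      weightedMoment p c 3 - 3 * weightedMean p c * weightedMoment p c 2 +
        3 * weightedMean p c ^ 2 * weightedMoment p c 1 -
          weightedMean p c ^ 3 * weightedMoment p c 0 := by
    simp only [weightedMoment, mul_sum, ← sum_sub_distrib, ← sum_add_distrib]
    exact sum_congr rfl fun a _ => by ring
  rw [weightedCentralMoment, expand, weightedMean]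
  field_simp
  ring

lemma abs_sub_weightedMean_le (hp : ∀ a, 0 ≤ p a) (h0 : 0 < weightedMoment p c 0) {r : ℝ}
    (hr : ∀ a b, |c a - c b| ≤ r) (a : ι) : |c a - weightedMean p c| ≤ r := by
  have : c a - weightedMean p c = (∑ b, p b * (c a - c b)) / weightedMoment p c 0 := by
    rw [weightedMean, eq_div_iff h0.ne', sub_mul, div_mul_cancel₀ _ h0.ne']
    simp only [weightedMoment, mul_sum, mul_sub, sum_sub_distrib, pow_zero, pow_one, mul_one]
    congr 1
    exact sum_congr rfl fun b _ => by ring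
  rw [this, abs_div, abs_of_pos h0, div_le_iff₀ h0]
  calc |∑ b, p b * (c a - c b)| ≤ ∑ b, p b * r := by
        refine (abs_sum_le_sum_abs _ _).trans (sum_le_sum fun b _ => ?_)
        rw [abs_mul, abs_of_nonneg (hp b)]
        exact mul_le_mul_of_nonneg_left (hr a b) (hp b)
    _ = r * weightedMoment p c 0 := by simp [weightedMoment, mul_sum, mul_comm]

lemma abs_weightedCentralMoment_three_le (hp : ∀ a, 0 ≤ p a) (h0 : 0 < weightedMoment p c 0)
    {r : ℝ} (hr : ∀ a b, |c a - c b| ≤ r) :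
    |weightedCentralMoment p c 3| ≤ r * weightedCentralMoment p c 2 := by
  set μ := weightedMean p c
  simp only [weightedCentralMoment, abs_div, abs_of_pos h0, ← mul_div_assoc]
  gcongr
  calc |∑ a, p a * (c a - μ) ^ 3| ≤ ∑ a, p a * (r * (c a - μ) ^ 2) := by
        refine (abs_sum_le_sum_abs _ _).trans (sum_le_sum fun a _ => ?_)
        rw [abs_mul, abs_of_nonneg (hp a), pow_succ, abs_mul, abs_of_nonneg (sq_nonneg _),
          mul_comm _ |_|]
        gcongr
        · exact hp a
        · exact abs_sub_weightedMean_le hp h0 hr a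
    _ = r * ∑ a, p a * (c a - μ) ^ 2 := by rw [mul_sum]; congr! 1; ring

end WeightedMoments

section ExponentialTilt

variable {ι : Type*} [Fintype ι] (w c : ι → ℝ)

noncomputable def expTilt (t : ℝ) (a : ι) : ℝ := w a * exp (t * c a)

noncomputable def logPartition (t : ℝ) : ℝ := log (∑ a, w a * exp (t * c a))

variable {w c}

lemma logPartition_eq_log_weightedMoment (t : ℝ) :
    logPartition w c t = log (weightedMoment (expTilt w c t) c 0) := by
  simp [logPartition, weightedMoment, expTilt]

lemma hasDerivAt_weightedMoment_expTilt (k : ℕ) (t : ℝ) :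
    HasDerivAt (fun s => weightedMoment (expTilt w c s) c k)
      (weightedMoment (expTilt w c t) c (k + 1)) t := by
  simp only [weightedMoment, expTilt]
  refine HasDerivAt.fun_sum fun a _ => ?_
  exact ((((hasDerivAt_mul_const (c a)).exp).const_mul (w a)).mul_const (c a ^ k)).congr_deriv
    (by ring)

lemma weightedMoment_expTilt_zero_pos (hw : ∀ a, 0 ≤ w a) (hpos : ∃ a, 0 < w a) (t : ℝ) :
    0 < weightedMoment (expTilt w c t) c 0 := by
  obtain ⟨a, ha⟩ := hpos
  exact weightedMoment_zero_pos (fun b => mul_nonneg (hw b) (exp_nonneg _))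
    ⟨a, mul_pos ha (exp_pos _)⟩

lemma hasDerivAt_logPartition (hw : ∀ a, 0 ≤ w a) (hpos : ∃ a, 0 < w a) (t : ℝ) :
    HasDerivAt (logPartition w c) (weightedMean (expTilt w c t) c) t := by
  rw [funext logPartition_eq_log_weightedMoment]
  exact (hasDerivAt_weightedMoment_expTilt 0 t).log (weightedMoment_expTilt_zero_pos hw hpos t).ne'

lemma hasDerivAt_weightedMean_expTilt (hw : ∀ a, 0 ≤ w a) (hpos : ∃ a, 0 < w a) (t : ℝ) :
    HasDerivAt (fun s => weightedMean (expTilt w c s) c)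
      (weightedCentralMoment (expTilt w c t) c 2) t := by
  have h0 := (weightedMoment_expTilt_zero_pos (c := c) hw hpos t).ne'
  refine ((hasDerivAt_weightedMoment_expTilt 1 t).div
    (hasDerivAt_weightedMoment_expTilt 0 t) h0).congr_deriv ?_
  rw [weightedCentralMoment_two h0, weightedMean]
  field_simp

lemma hasDerivAt_weightedCentralMoment_two_expTilt (hw : ∀ a, 0 ≤ w a) (hpos : ∃ a, 0 < w a)
    (t : ℝ) :
    HasDerivAt (fun s => weightedCentralMoment (expTilt w c s) c 2)
      (weightedCentralMoment (expTilt w c t) c 3) t := by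
  have h0 : ∀ s, weightedMoment (expTilt w c s) c 0 ≠ 0 :=
    fun s => (weightedMoment_expTilt_zero_pos hw hpos s).ne'
  simp only [weightedCentralMoment_two (h0 _)]
  refine (((hasDerivAt_weightedMoment_expTilt 2 t).div (hasDerivAt_weightedMoment_expTilt 0 t)
    (h0 t)).sub ((hasDerivAt_weightedMean_expTilt hw hpos t).pow 2)).congr_deriv ?_
  have h0t := h0 t
  rw [weightedCentralMoment_three h0t, weightedCentralMoment_two h0t, weightedMean]
  simp only [Nat.reduceAdd, zero_add, Nat.cast_ofNat, Nat.add_one_sub_one, pow_one]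
  field_simp
  ring

lemma iteratedDeriv_two_logPartition (hw : ∀ a, 0 ≤ w a) (hpos : ∃ a, 0 < w a) :
    iteratedDeriv 2 (logPartition w c) = fun t => weightedCentralMoment (expTilt w c t) c 2 := by
  have hderiv : deriv (logPartition w c) = fun t => weightedMean (expTilt w c t) c :=
    funext fun t => (hasDerivAt_logPartition hw hpos t).deriv
  rw [iteratedDeriv_succ, iteratedDeriv_one, hderiv]
  exact funext fun t => (hasDerivAt_weightedMean_expTilt hw hpos t).deriv

lemma iteratedDeriv_three_logPartition (hw : ∀ a, 0 ≤ w a) (hpos : ∃ a, 0 < w a) :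
    iteratedDeriv 3 (logPartition w c) = fun t => weightedCentralMoment (expTilt w c t) c 3 := by
  rw [iteratedDeriv_succ, iteratedDeriv_two_logPartition hw hpos]
  exact funext fun t => (hasDerivAt_weightedCentralMoment_two_expTilt hw hpos t).deriv

lemma abs_iteratedDeriv_three_logPartition_le (hw : ∀ a, 0 ≤ w a) (hpos : ∃ a, 0 < w a)
    {r : ℝ} (hr : ∀ a b, |c a - c b| ≤ r) (t : ℝ) :
    |iteratedDeriv 3 (logPartition w c) t| ≤ r * iteratedDeriv 2 (logPartition w c) t := by
  rw [iteratedDeriv_three_logPartition hw hpos, iteratedDeriv_two_logPartition hw hpos]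
  exact abs_weightedCentralMoment_three_le (fun a => mul_nonneg (hw a) (exp_nonneg _))
    (weightedMoment_expTilt_zero_pos hw hpos t) hr

end ExponentialTilt

lemma abs_sum_mul_boolIndicator_sub_le {ι : Type*} [Fintype ι] {l : ι → ℝ}
    (hl : ∀ i, |l i| ≤ 1) (α β : ι → Bool) :
    |∑ i, l i * ((if α i then (1 : ℝ) else 0) - (if β i then 1 else 0))| ≤
      Fintype.card ι := by
  have h_ind : ∀ x y : Bool, |(if x then (1 : ℝ) else 0) - (if y then 1 else 0)| ≤ 1 := by
    intro x y
    cases x <;> cases y <;> norm_num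
  calc _ ≤ ∑ i, |l i * ((if α i then (1 : ℝ) else 0) - (if β i then 1 else 0))| :=
        abs_sum_le_sum_abs _ _
    _ ≤ ∑ _i, (1 : ℝ) := sum_le_sum fun i _ => by
        rw [abs_mul]
        exact mul_le_one₀ (hl i) (abs_nonneg _) (h_ind _ _)
    _ = Fintype.card ι := by simp

/-- The dual max-entropy objective on the Boolean hypercube is `4n`-second-order
robust: `|D³h(λ₀)[λ₁,λ₁,λ₁]| ≤ 4n·D²h(λ₀)[λ₁,λ₁]` for all directions
`λ₁` with `‖λ₁‖_∞ ≤ 1`, where the directional derivatives are the derivatives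
of `t ↦ h(λ₀ + t·λ₁)` at `t = 0`. -/
theorem dual_second_order_robust {n : ℕ} (q : (Fin n → Bool) → ℝ)
    (hq0 : ∀ α, 0 ≤ q α) (hq1 : ∑ α, q α = 1)
    (θ : Fin n → ℝ)
    (h : (Fin n → ℝ) → ℝ)
    (hdef : ∀ lam, h lam = Real.log (∑ α : Fin n → Bool,
      q α * Real.exp (∑ i, lam i * ((if α i then (1 : ℝ) else 0) - θ i))))
    (lam₀ lam₁ : Fin n → ℝ) (hlam₁ : ∀ i, |lam₁ i| ≤ 1) :
    |iteratedDeriv 3 (fun t : ℝ => h (lam₀ + t • lam₁)) 0| ≤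
      4 * n * iteratedDeriv 2 (fun t : ℝ => h (lam₀ + t • lam₁)) 0 := by
  set v : (Fin n → Bool) → Fin n → ℝ := fun α i => (if α i then (1 : ℝ) else 0) - θ i
  set w := fun α => q α * exp (∑ i, lam₀ i * v α i)
  set c := fun α => ∑ i, lam₁ i * v α i
  have h_eq : (fun t : ℝ => h (lam₀ + t • lam₁)) = logPartition w c := by
    funext t
    rw [hdef, logPartition]
    refine congrArg log (sum_congr rfl fun α _ => ?_)
    simp only [w, c, v, mul_sum, mul_assoc, ← exp_add, ← sum_add_distrib, Pi.add_apply,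
      Pi.smul_apply, smul_eq_mul, add_mul]
  have hw : ∀ α, 0 ≤ w α := fun α => mul_nonneg (hq0 α) (exp_nonneg _)
  have hpos : ∃ α, 0 < w α := by
    obtain ⟨α, -, hα⟩ :=
      exists_lt_of_sum_lt (show ∑ _α, (0 : ℝ) < ∑ α, q α by simp [hq1])
    exact ⟨α, mul_pos hα (exp_pos _)⟩
  have hc : ∀ α β, |c α - c β| ≤ 4 * n := fun α β => calc
    |c α - c β| =
        |∑ i, lam₁ i * ((if α i then (1 : ℝ) else 0) - (if β i then 1 else 0))| := by
      simp only [c, v, ← sum_sub_distrib, ← mul_sub, sub_sub_sub_cancel_right]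
    _ ≤ n := by simpa using abs_sum_mul_boolIndicator_sub_le hlam₁ α β
    _ ≤ 4 * n := by linarith [(n.cast_nonneg : (0 : ℝ) ≤ n)]
  rw [h_eq]
  exact abs_iteratedDeriv_three_logPartition_le hw hpos hc 0
end

section
/- Let S be a finite dataset with class labels Y_α ∈ 𝒴 and binary protected attributes Z_α ∈ {0,1}, with frequencies n_α, and fix τ ∈ (0,1]. Define weights w(α) = n_α·c(Y_α)/c(Y_α, Z_α) where c(y) = Σ_α 1[Y_α = y]·n_α, c(y,1) = Σ_α 1[Y_α=y, Z_α=1]·n_α, and c(y,0) = (1/τ)·Σ_α 1[Y_α=y, Z_α=0]·n_α, normalized so weights sum to 1. Assume c(y, z) > 0 for all y, z. Then the resulting distribution w satisfies w(Y=y, Z=0) = τ·w(Y=y, Z=1) for every y ∈ 𝒴, and w(Z=0) = τ·w(Z=1), and w(Y=y | Z=0) = w(Y=y | Z=1) for every y. -/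
/-!
On the cell `(y, z)` every weight is `n_α · c(y) / c(y, z)`, so the cell's total weight is
`c(y)/c(y, z)` times the cell's total frequency. That frequency is `c(y, 1)` for `z = 1` and
`τ · c(y, 0)` for `z = 0`, so the cells `(y, 1)` and `(y, 0)` receive the masses `c(y)/W` and
`τ · c(y)/W`. Summing over `y` gives the marginals, and the common factor `τ` cancels from the
conditionals.
-/

open Finset

section Cells

variable {ι 𝒴 : Type*} [Fintype ι] [DecidableEq 𝒴] (Yf : ι → 𝒴) (Zf : ι → Bool)

theorem sum_cell_mul_comp (f : ι → ℝ) (g : 𝒴 → Bool → ℝ) (y : 𝒴) (z : Bool) :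
    ∑ α ∈ univ.filter (fun α => Yf α = y ∧ Zf α = z), f α * g (Yf α) (Zf α) =
      g y z * ∑ α ∈ univ.filter (fun α => Yf α = y ∧ Zf α = z), f α := by
  rw [mul_sum]
  refine sum_congr rfl fun α hα => ?_
  obtain ⟨hy, hz⟩ := (mem_filter.mp hα).2
  rw [hy, hz, mul_comm]

theorem sum_filter_eq_sum_image_sum_cell (f : ι → ℝ) (z : Bool) :
    ∑ α ∈ univ.filter (fun α => Zf α = z), f α =
      ∑ y ∈ univ.image Yf, ∑ α ∈ univ.filter (fun α => Yf α = y ∧ Zf α = z), f α := by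
  rw [← sum_fiberwise_of_maps_to (t := univ.image Yf) (g := Yf)
    (fun α _ => mem_image_of_mem Yf (mem_univ α)) f]
  refine sum_congr rfl fun y _ => ?_
  simp only [filter_filter, and_comm]

theorem sum_filter_false_eq_mul_of_cells (f : ι → ℝ) (τ : ℝ)
    (h : ∀ y, ∑ α ∈ univ.filter (fun α => Yf α = y ∧ Zf α = false), f α =
      τ * ∑ α ∈ univ.filter (fun α => Yf α = y ∧ Zf α = true), f α) :
    ∑ α ∈ univ.filter (fun α => Zf α = false), f α =
      τ * ∑ α ∈ univ.filter (fun α => Zf α = true), f α := by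
  rw [sum_filter_eq_sum_image_sum_cell Yf, sum_filter_eq_sum_image_sum_cell Yf, mul_sum]
  exact sum_congr rfl fun y _ => h y

end Cells

theorem reweighting_guarantees_general {ι 𝒴 : Type*} [Fintype ι]
    [DecidableEq 𝒴]
    (Yf : ι → 𝒴) (Zf : ι → Bool) (n : ι → ℕ)
    (τ : ℝ) (hτ0 : 0 < τ)
    (c : 𝒴 → ℝ)
    (cz : 𝒴 → Bool → ℝ)
    (hcz1 : ∀ y, cz y true =
      ∑ α, if Yf α = y ∧ Zf α = true then (n α : ℝ) else 0)
    (hcz0 : ∀ y, cz y false =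
      (1 / τ) * ∑ α, if Yf α = y ∧ Zf α = false then (n α : ℝ) else 0)
    (hczpos : ∀ y z, 0 < cz y z)
    (w : ι → ℝ) (hw : ∀ α, w α = (n α : ℝ) * c (Yf α) / cz (Yf α) (Zf α))
    (W : ℝ)
    (wn : ι → ℝ) (hwn : ∀ α, wn α = w α / W)
    (wJ : 𝒴 → Bool → ℝ)
    (hwJ : ∀ y z, wJ y z = ∑ α ∈ univ.filter (fun α => Yf α = y ∧ Zf α = z), wn α)
    (margZ : Bool → ℝ)
    (hmargZ : ∀ z, margZ z = ∑ α ∈ univ.filter (fun α => Zf α = z), wn α) :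
    (∀ y : 𝒴, wJ y false = τ * wJ y true) ∧
    margZ false = τ * margZ true ∧
    (∀ y : 𝒴, wJ y false / margZ false = wJ y true / margZ true) := by
  have hwn' : ∀ α, wn α = n α * (c (Yf α) / cz (Yf α) (Zf α) / W) := fun α => by
    rw [hwn, hw]; ring
  have hcell : ∀ y z, wJ y z = c y / cz y z / W *
      ∑ α ∈ univ.filter (fun α => Yf α = y ∧ Zf α = z), (n α : ℝ) := fun y z => by
    simp only [hwJ, hwn', sum_cell_mul_comp Yf Zf _ (fun y z => c y / cz y z / W)]
  have hjoint : ∀ y, wJ y false = τ * wJ y true := by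
    intro y
    have hfalse : ∑ α ∈ univ.filter (fun α => Yf α = y ∧ Zf α = false), (n α : ℝ) =
        τ * cz y false := by
      rw [hcz0, sum_filter, ← mul_assoc, mul_one_div_cancel hτ0.ne', one_mul]
    have htrue : ∑ α ∈ univ.filter (fun α => Yf α = y ∧ Zf α = true), (n α : ℝ) =
        cz y true := by
      rw [hcz1, sum_filter]
    rw [hcell, hcell, hfalse, htrue]
    field_simp [(hczpos y false).ne', (hczpos y true).ne']
  have hmarg : margZ false = τ * margZ true := by
    simp only [hmargZ]
    exact sum_filter_false_eq_mul_of_cells Yf Zf wn τ fun y => by rw [← hwJ, ← hwJ, hjoint]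
  refine ⟨hjoint, hmarg, fun y => ?_⟩
  rw [hjoint, hmarg, mul_div_mul_left _ _ hτ0.ne']

/-- Guarantees of the reweighting algorithm: the normalized weights
`w(α) = n_α·c(Y_α)/c(Y_α,Z_α)` give a distribution with
`w(Y=y,Z=0) = τ·w(Y=y,Z=1)`, `w(Z=0) = τ·w(Z=1)` and equal conditional label
probabilities across the two protected groups. -/
theorem reweighting_guarantees {ι 𝒴 : Type*} [Fintype ι] [Fintype 𝒴]
    [DecidableEq 𝒴] [Nonempty ι]
    (Yf : ι → 𝒴) (Zf : ι → Bool) (n : ι → ℕ) (hn : ∀ α, 1 ≤ n α)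
    (τ : ℝ) (hτ0 : 0 < τ) (hτ1 : τ ≤ 1)
    (c : 𝒴 → ℝ) (hc : ∀ y, c y = ∑ α, if Yf α = y then (n α : ℝ) else 0)
    (cz : 𝒴 → Bool → ℝ)
    (hcz1 : ∀ y, cz y true =
      ∑ α, if Yf α = y ∧ Zf α = true then (n α : ℝ) else 0)
    (hcz0 : ∀ y, cz y false =
      (1 / τ) * ∑ α, if Yf α = y ∧ Zf α = false then (n α : ℝ) else 0)
    (hczpos : ∀ y z, 0 < cz y z)
    (w : ι → ℝ) (hw : ∀ α, w α = (n α : ℝ) * c (Yf α) / cz (Yf α) (Zf α))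
    (W : ℝ) (hW : W = ∑ α, w α)
    (wn : ι → ℝ) (hwn : ∀ α, wn α = w α / W)
    (wJ : 𝒴 → Bool → ℝ)
    (hwJ : ∀ y z, wJ y z = ∑ α ∈ univ.filter (fun α => Yf α = y ∧ Zf α = z), wn α)
    (margZ : Bool → ℝ)
    (hmargZ : ∀ z, margZ z = ∑ α ∈ univ.filter (fun α => Zf α = z), wn α) :
    (∀ y : 𝒴, wJ y false = τ * wJ y true) ∧
    margZ false = τ * margZ true ∧
    (∀ y : 𝒴, wJ y false / margZ false = wJ y true / margZ true) :=
  reweighting_guarantees_general Yf Zf n τ hτ0 c cz hcz1 hcz0 hczpos w hw W wn hwn wJ hwJ margZ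
    hmargZ
end
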